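/- arXiv:1805.05229 — 2 statements merged into one kernel-verified Lean document; each statement's English description precedes it below -/
import Mathlib

section
/- If u is a smooth, rapidly decaying (in x) solution of ∂ₜu = ∂ₓ⁵u on [0,T] × ℝ with u(0,x) = 0 for all x > 0, and u(t,0) = ∂ₓu(t,0) = 0 for all t ∈ (0,T), then u(T,x) = 0 for all x > 0. -/
open MeasureTheory Filter Topology Set Metric

/-- Uniqueness for the linear Kawahara equation on the right half-line: a smooth,
rapidly decaying solution of `∂ₜ u = ∂ₓ⁵ u` vanishing initially on `(0,∞)` and with
`u(t,0) = ∂ₓ u(t,0) = 0` on `(0,T)` vanishes at time `T` on `(0,∞)`. -/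
theorem linear_kawahara_halfline_uniqueness
    (u : ℝ → ℝ → ℝ) (T : ℝ) (hT : 0 < T)
    (hsmooth : ContDiff ℝ (⊤ : ℕ∞) (Function.uncurry u))
    (hdecay : ∀ n k : ℕ, ∃ C : ℝ, ∀ t ∈ Set.Icc (0:ℝ) T, ∀ x : ℝ,
      |x|^n * |iteratedDeriv k (u t) x| ≤ C)
    (heq : ∀ t x : ℝ, deriv (fun s => u s x) t = iteratedDeriv 5 (u t) x)
    (hinit : ∀ x : ℝ, 0 < x → u 0 x = 0)
    (hbdry : ∀ t : ℝ, 0 < t → t < T → u t 0 = 0 ∧ iteratedDeriv 1 (u t) 0 = 0) :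
    ∀ x : ℝ, 0 < x → u T x = 0 := by
  -- smoothness in each variable
  have hux : ∀ t, ContDiff ℝ (⊤ : ℕ∞) (u t) := fun t => hsmooth.comp (contDiff_prodMk_right t)
  have hut : ∀ x, ContDiff ℝ (⊤ : ℕ∞) (fun s => u s x) := fun x =>
    hsmooth.comp (contDiff_prodMk_left x)
  have hD : ∀ t (k : ℕ) x, HasDerivAt (iteratedDeriv k (u t)) (iteratedDeriv (k+1) (u t) x) x := by
    intro t k x
    rw [iteratedDeriv_succ]
    exact (((hux t).differentiable_iteratedDeriv k (by exact_mod_cast ENat.coe_lt_top k)).differentiableAt).hasDerivAt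
  have hcontk : ∀ t (k : ℕ), Continuous (iteratedDeriv k (u t)) := fun t k =>
    (hux t).continuous_iteratedDeriv k (by exact_mod_cast le_top)
  -- consolidated decay bound
  have key : ∀ k : ℕ, ∃ C : ℝ, 0 ≤ C ∧ ∀ t ∈ Set.Icc (0:ℝ) T, ∀ x : ℝ,
      (1 + x^2) * |iteratedDeriv k (u t) x| ≤ C := by
    intro k
    obtain ⟨C0, h0⟩ := hdecay 0 k
    obtain ⟨C2, h2⟩ := hdecay 2 k
    have h0T : (0:ℝ) ∈ Set.Icc (0:ℝ) T := ⟨le_refl _, hT.le⟩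
    have hC0 : 0 ≤ C0 := le_trans (by positivity) (h0 0 h0T 0)
    have hC2 : 0 ≤ C2 := le_trans (by positivity) (h2 0 h0T 0)
    refine ⟨C0 + C2, by linarith, fun t ht x => ?_⟩
    have e0 := h0 t ht x
    have e2 := h2 t ht x
    simp only [pow_zero, one_mul, sq_abs] at e0 e2
    nlinarith [abs_nonneg (iteratedDeriv k (u t) x), sq_nonneg x]
  choose C hCpos hC using key
  -- pointwise consequences
  have hCb : ∀ (k : ℕ), ∀ t ∈ Set.Icc (0:ℝ) T, ∀ x : ℝ, |iteratedDeriv k (u t) x| ≤ C k := by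
    intro k t ht x
    have h := hC k t ht x
    nlinarith [abs_nonneg (iteratedDeriv k (u t) x), sq_nonneg x]
  have hCd : ∀ (k : ℕ), ∀ t ∈ Set.Icc (0:ℝ) T, ∀ x : ℝ,
      |iteratedDeriv k (u t) x| ≤ C k / (1 + x^2) := by
    intro k t ht x
    rw [le_div_iff₀ (by positivity)]
    have h := hC k t ht x
    linarith [h]
  -- tendsto at infinity
  have htend : ∀ (k : ℕ), ∀ t ∈ Set.Icc (0:ℝ) T,
      Tendsto (iteratedDeriv k (u t)) atTop (𝓝 0) := by
    intro k t ht
    have hb : Tendsto (fun x : ℝ => C k / (1 + x^2)) atTop (𝓝 0) := by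
      apply Tendsto.div_atTop (tendsto_const_nhds)
      exact tendsto_atTop_add_const_left _ _ (tendsto_pow_atTop two_ne_zero)
    exact squeeze_zero_norm (fun x => hCd k t ht x) hb
  -- integrability helper
  have hint : ∀ (f : ℝ → ℝ) (D : ℝ), Continuous f → (∀ x, |f x| ≤ D / (1 + x^2)) →
      IntegrableOn f (Ioi 0) := by
    intro f D hf hb
    refine Integrable.mono ((integrable_inv_one_add_sq.const_mul D).restrict (s := Ioi 0))
      hf.aestronglyMeasurable ?_
    refine Filter.Eventually.of_forall fun x => ?_
    rw [Real.norm_eq_abs, Real.norm_eq_abs]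
    refine (hb x).trans ?_
    rw [div_eq_mul_inv]
    exact le_abs_self _
  -- the energy
  set E : ℝ → ℝ := fun t => ∫ x in Ioi (0:ℝ), (u t x)^2 with hE
  -- continuity of E on Icc
  have hEcont : ContinuousOn E (Set.Icc 0 T) := by
    intro t₀ ht₀
    apply continuousWithinAt_of_dominated (bound := fun x => C 0 * (C 0 / (1 + x^2)))
    · exact Filter.Eventually.of_forall fun t =>
        (((hux t).continuous).pow 2).aestronglyMeasurable
    · filter_upwards [self_mem_nhdsWithin] with t ht
      refine Filter.Eventually.of_forall fun x => ?_
      rw [Real.norm_eq_abs, abs_pow, sq]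
      have h1 : |u t x| ≤ C 0 := by simpa [iteratedDeriv_zero] using hCb 0 t ht x
      have h2 : |u t x| ≤ C 0 / (1 + x^2) := by simpa [iteratedDeriv_zero] using hCd 0 t ht x
      exact mul_le_mul h1 h2 (abs_nonneg _) (hCpos 0)
    · exact ((integrable_inv_one_add_sq.const_mul (C 0)).const_mul (C 0)).restrict
    · exact Filter.Eventually.of_forall fun x =>
        (((hut x).continuous).pow 2).continuousWithinAt
  -- derivative of E on the interior
  have hEderiv : ∀ t₀ ∈ Ioo (0:ℝ) T, HasDerivAt E (-(iteratedDeriv 2 (u t₀) 0 *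
      iteratedDeriv 2 (u t₀) 0)) t₀ := by
    intro t₀ ht₀
    rw [hE]
    have ht₀' : t₀ ∈ Set.Icc (0:ℝ) T := ⟨ht₀.1.le, ht₀.2.le⟩
    set ε : ℝ := min t₀ (T - t₀) with hε
    have hεpos : 0 < ε := lt_min ht₀.1 (by linarith [ht₀.2])
    have hball : ball t₀ ε ⊆ Set.Icc 0 T := by
      intro t ht
      rw [mem_ball, Real.dist_eq] at ht
      have h := abs_lt.mp ht
      constructor
      · linarith [min_le_left t₀ (T - t₀)]
      · linarith [min_le_right t₀ (T - t₀)]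
    have hder : ∀ (t x : ℝ), HasDerivAt (fun s => (u s x)^2)
        (2 * u t x * iteratedDeriv 5 (u t) x) t := by
      intro t x
      have h1 : HasDerivAt (fun s => u s x) (iteratedDeriv 5 (u t) x) t := by
        have := (((hut x).differentiable (by simp)) t).hasDerivAt
        rwa [heq t x] at this
      have h2 := h1.fun_pow 2
      refine h2.congr_deriv ?_
      push_cast
      ring
    have hbound : ∀ x : ℝ, ∀ t ∈ ball t₀ ε,
        ‖2 * u t x * iteratedDeriv 5 (u t) x‖ ≤ 2 * C 0 * C 5 * (1 + x^2)⁻¹ := by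
      intro x t ht
      have htI := hball ht
      have h0 : |u t x| ≤ C 0 / (1 + x^2) := by
        simpa [iteratedDeriv_zero] using hCd 0 t htI x
      have h5 : |iteratedDeriv 5 (u t) x| ≤ C 5 := hCb 5 t htI x
      rw [Real.norm_eq_abs, abs_mul, abs_mul, abs_two]
      have hx2 : (0:ℝ) < 1 + x^2 := by positivity
      calc 2 * |u t x| * |iteratedDeriv 5 (u t) x| ≤ 2 * (C 0 / (1 + x^2)) * C 5 := by
            have hnn : (0:ℝ) ≤ 2 * (C 0 / (1 + x^2)) :=
              mul_nonneg (by norm_num) (div_nonneg (hCpos 0) (by positivity))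
            exact mul_le_mul (mul_le_mul_of_nonneg_left h0 (by norm_num)) h5 (abs_nonneg _) hnn
        _ = 2 * C 0 * C 5 * (1 + x^2)⁻¹ := by field_simp
    have hmain := hasDerivAt_integral_of_dominated_loc_of_deriv_le (μ := volume.restrict (Ioi 0))
      (F := fun t x => (u t x)^2) (F' := fun t x => 2 * u t x * iteratedDeriv 5 (u t) x)
      (x₀ := t₀) (bound := fun x => 2 * C 0 * C 5 * (1 + x^2)⁻¹) (ball_mem_nhds t₀ hεpos)
      (Filter.Eventually.of_forall fun t => (((hux t).continuous).pow 2).aestronglyMeasurable)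
      (by
        refine hint _ (C 0 * C 0) (((hux t₀).continuous).pow 2) fun x => ?_
        rw [abs_pow, sq, mul_div_assoc]
        have h1 : |u t₀ x| ≤ C 0 := by simpa [iteratedDeriv_zero] using hCb 0 t₀ ht₀' x
        have h2 : |u t₀ x| ≤ C 0 / (1 + x^2) := by simpa [iteratedDeriv_zero] using hCd 0 t₀ ht₀' x
        exact mul_le_mul h1 h2 (abs_nonneg _) (hCpos 0))
      ((((continuous_const.mul ((hux t₀).continuous)).mul (hcontk t₀ 5))).aestronglyMeasurable)
      (Filter.Eventually.of_forall fun x => fun t ht => hbound x t ht)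
      (((integrable_inv_one_add_sq.const_mul (2 * C 0 * C 5))).restrict)
      (Filter.Eventually.of_forall fun x => fun t _ => hder t x)
    obtain ⟨-, hE'⟩ := hmain
    -- now compute the integral via integration by parts
    set v := u t₀ with hv
    have hibp : ∫ x in Ioi (0:ℝ), v x * iteratedDeriv 5 v x
        = -(iteratedDeriv 2 v 0 * iteratedDeriv 2 v 0 / 2) := by
      have hg : ∀ x, HasDerivAt (fun y => v y * iteratedDeriv 4 v y
          - iteratedDeriv 1 v y * iteratedDeriv 3 v y
          + iteratedDeriv 2 v y * iteratedDeriv 2 v y / 2) (v x * iteratedDeriv 5 v x) x := by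
        intro x
        have h0 : HasDerivAt v (iteratedDeriv 1 v x) x := by
          have := hD t₀ 0 x; rwa [iteratedDeriv_zero] at this
        have h1 : HasDerivAt (iteratedDeriv 1 v) (iteratedDeriv 2 v x) x := hD t₀ 1 x
        have h2 : HasDerivAt (iteratedDeriv 2 v) (iteratedDeriv 3 v x) x := hD t₀ 2 x
        have h3 : HasDerivAt (iteratedDeriv 3 v) (iteratedDeriv 4 v x) x := hD t₀ 3 x
        have h4 : HasDerivAt (iteratedDeriv 4 v) (iteratedDeriv 5 v x) x := hD t₀ 4 x
        have h := ((h0.mul h4).sub (h1.mul h3)).add ((h2.mul h2).div_const 2)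
        refine h.congr_deriv ?_
        ring
      have hgt : Tendsto (fun y => v y * iteratedDeriv 4 v y
          - iteratedDeriv 1 v y * iteratedDeriv 3 v y
          + iteratedDeriv 2 v y * iteratedDeriv 2 v y / 2) atTop (𝓝 0) := by
        have h0 : Tendsto v atTop (𝓝 0) := by
          have := htend 0 t₀ ht₀'; rwa [iteratedDeriv_zero] at this
        have h := (((h0.mul (htend 4 t₀ ht₀')).sub
          ((htend 1 t₀ ht₀').mul (htend 3 t₀ ht₀'))).add
          (((htend 2 t₀ ht₀').mul (htend 2 t₀ ht₀')).div_const 2))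
        simpa using h
      have hintg : IntegrableOn (fun x => v x * iteratedDeriv 5 v x) (Ioi 0) := by
        refine hint _ (C 0 * C 5) (((hux t₀).continuous).mul (hcontk t₀ 5)) fun x => ?_
        rw [abs_mul]
        have h2 : |v x| ≤ C 0 / (1 + x^2) := by simpa [iteratedDeriv_zero] using hCd 0 t₀ ht₀' x
        have h5 : |iteratedDeriv 5 v x| ≤ C 5 := hCb 5 t₀ ht₀' x
        calc |v x| * |iteratedDeriv 5 v x| ≤ (C 0 / (1 + x^2)) * C 5 :=
              mul_le_mul h2 h5 (abs_nonneg _) (div_nonneg (hCpos 0) (by positivity))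
          _ = C 0 * C 5 / (1 + x^2) := by ring
      have hgc : Continuous (fun y => v y * iteratedDeriv 4 v y
          - iteratedDeriv 1 v y * iteratedDeriv 3 v y
          + iteratedDeriv 2 v y * iteratedDeriv 2 v y / 2) := by
        exact ((((hux t₀).continuous).mul (hcontk t₀ 4)).sub
          ((hcontk t₀ 1).mul (hcontk t₀ 3))).add (((hcontk t₀ 2).mul (hcontk t₀ 2)).div_const 2)
      have h := integral_Ioi_of_hasDerivAt_of_tendsto (a := 0)
        hgc.continuousWithinAt (fun x _ => hg x) hintg hgt
      rw [h]
      obtain ⟨hb1, hb2⟩ := hbdry t₀ ht₀.1 ht₀.2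
      rw [show v 0 = 0 from hb1, show iteratedDeriv 1 v 0 = 0 from hb2]
      ring
    refine hE'.congr_deriv ?_
    have : (fun x : ℝ => 2 * u t₀ x * iteratedDeriv 5 (u t₀) x)
        = fun x : ℝ => 2 * (v x * iteratedDeriv 5 v x) := by
      funext x; ring
    rw [this, integral_const_mul, hibp]
    ring
  -- E is antitone
  have hanti : AntitoneOn E (Set.Icc 0 T) := by
    apply antitoneOn_of_deriv_nonpos (convex_Icc 0 T) hEcont
    · intro t ht
      rw [interior_Icc] at ht
      exact ((hEderiv t ht).differentiableAt).differentiableWithinAt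
    · intro t ht
      rw [interior_Icc] at ht
      rw [(hEderiv t ht).deriv]
      nlinarith [sq_nonneg (iteratedDeriv 2 (u t) 0)]
  have hE0 : E 0 = 0 := by
    rw [hE]
    simp only
    rw [setIntegral_congr_fun measurableSet_Ioi (g := fun _ => (0:ℝ))
      (fun x hx => by rw [hinit x hx]; ring)]
    simp
  have hET : E T = 0 := by
    have h1 : E T ≤ E 0 := hanti ⟨le_refl _, hT.le⟩ ⟨hT.le, le_refl _⟩ hT.le
    have h2 : 0 ≤ E T := setIntegral_nonneg measurableSet_Ioi fun x _ => sq_nonneg _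
    linarith [hE0 ▸ h1]
  -- conclude
  intro x₀ hx₀
  by_contra hne
  have hTmem : T ∈ Set.Icc (0:ℝ) T := ⟨hT.le, le_refl _⟩
  have hint' : IntegrableOn (fun x => (u T x)^2) (Ioi 0) := by
    refine hint _ (C 0 * C 0) (((hux T).continuous).pow 2) fun x => ?_
    rw [abs_pow, sq, mul_div_assoc]
    have h1 : |u T x| ≤ C 0 := by simpa [iteratedDeriv_zero] using hCb 0 T hTmem x
    have h2 : |u T x| ≤ C 0 / (1 + x^2) := by simpa [iteratedDeriv_zero] using hCd 0 T hTmem x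
    exact mul_le_mul h1 h2 (abs_nonneg _) (hCpos 0)
  have hae : (fun x => (u T x)^2) =ᵐ[volume.restrict (Ioi 0)] 0 :=
    (integral_eq_zero_iff_of_nonneg (fun x => sq_nonneg _) hint').mp hET
  have hopen : IsOpen {x : ℝ | (u T x)^2 ≠ 0} :=
    isOpen_ne.preimage (((hux T).continuous).pow 2)
  have hmem : x₀ ∈ {x : ℝ | (u T x)^2 ≠ 0} ∩ Ioi 0 := ⟨pow_ne_zero 2 hne, hx₀⟩
  have hpos : 0 < volume ({x : ℝ | (u T x)^2 ≠ 0} ∩ Ioi 0) :=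
    (hopen.inter isOpen_Ioi).measure_pos volume ⟨x₀, hmem⟩
  have hzero : volume.restrict (Ioi 0) {x : ℝ | (u T x)^2 ≠ 0} = 0 := by
    have := ae_iff.mp hae
    simpa using this
  rw [Measure.restrict_apply hopen.measurableSet] at hzero
  exact absurd hzero hpos.ne'
end

section
/- Let λ₁, λ₂ ∈ ℝ, B₀ = cos(π/10)Γ(1/5)/(5π), and define a_j = cos((1+4λ_j)π/10)/(5B₀Γ(4/5)sin((1−λ_j)π/5)) and b_j = cos((4λ_j−3)π/10)/(5B₀Γ(4/5)sin((2−λ_j)π/5)) for j = 1,2 (assuming the sines are nonzero). If λ₁ − λ₂ is not an integer multiple of 5, then the 2×2 matrix [[a₁, a₂],[b₁, b₂]] is invertible, i.e., a₁b₂ − a₂b₁ ≠ 0. -/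
open Real

/-- Invertibility of the boundary-trace coefficient matrix for the right half-line
problem: with `B₀ = cos(π/10)Γ(1/5)/(5π)`,
`a_j = cos((1+4λ_j)π/10)/(5B₀Γ(4/5)sin((1−λ_j)π/5))` and
`b_j = cos((4λ_j−3)π/10)/(5B₀Γ(4/5)sin((2−λ_j)π/5))`, if `λ₁ − λ₂ ∉ 5ℤ` then
`a₁b₂ − a₂b₁ ≠ 0`. -/
theorem boundary_coefficient_matrix_invertible
    (lam₁ lam₂ : ℝ)
    (h₁ : Real.sin ((1 - lam₁) * π / 5) ≠ 0)
    (h₂ : Real.sin ((1 - lam₂) * π / 5) ≠ 0)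
    (h₃ : Real.sin ((2 - lam₁) * π / 5) ≠ 0)
    (h₄ : Real.sin ((2 - lam₂) * π / 5) ≠ 0)
    (hdiff : ∀ n : ℤ, lam₁ - lam₂ ≠ 5 * (n : ℝ)) :
    let B₀ : ℝ := Real.cos (π / 10) * Real.Gamma (1/5) / (5 * π)
    let a : ℝ → ℝ := fun lam =>
      Real.cos ((1 + 4 * lam) * π / 10) / (5 * B₀ * Real.Gamma (4/5) * Real.sin ((1 - lam) * π / 5))
    let b : ℝ → ℝ := fun lam =>
      Real.cos ((4 * lam - 3) * π / 10) / (5 * B₀ * Real.Gamma (4/5) * Real.sin ((2 - lam) * π / 5))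
    a lam₁ * b lam₂ - a lam₂ * b lam₁ ≠ 0 := by
  intro B₀ a b
  have hπ : (0:ℝ) < π := Real.pi_pos
  have hcos10 : 0 < Real.cos (π / 10) := by
    apply Real.cos_pos_of_mem_Ioo
    constructor <;> nlinarith
  have hΓ1 : 0 < Real.Gamma (1/5) := Real.Gamma_pos_of_pos (by norm_num)
  have hΓ4 : 0 < Real.Gamma (4/5) := Real.Gamma_pos_of_pos (by norm_num)
  have hB : 0 < B₀ := by
    show 0 < Real.cos (π / 10) * Real.Gamma (1/5) / (5 * π)
    positivity
  have hc : (5 * B₀ * Real.Gamma (4/5)) ≠ 0 := by positivity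
  have key_a : ∀ lam : ℝ, Real.sin ((1 - lam) * π / 5) ≠ 0 →
      a lam = 2 * Real.cos ((1 - lam) * π / 5) / (5 * B₀ * Real.Gamma (4/5)) := by
    intro lam h
    show Real.cos ((1 + 4 * lam) * π / 10) / _ = _
    have e : (1 + 4 * lam) * π / 10 = π/2 - 2 * ((1 - lam) * π / 5) := by ring
    rw [e, Real.cos_pi_div_two_sub, Real.sin_two_mul]
    field_simp
  have key_b : ∀ lam : ℝ, Real.sin ((2 - lam) * π / 5) ≠ 0 →
      b lam = 2 * Real.cos ((2 - lam) * π / 5) / (5 * B₀ * Real.Gamma (4/5)) := by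
    intro lam h
    show Real.cos ((4 * lam - 3) * π / 10) / _ = _
    have e : (4 * lam - 3) * π / 10 = π/2 - 2 * ((2 - lam) * π / 5) := by ring
    rw [e, Real.cos_pi_div_two_sub, Real.sin_two_mul]
    field_simp
  rw [key_a lam₁ h₁, key_a lam₂ h₂, key_b lam₁ h₃, key_b lam₂ h₄]
  have trig : Real.cos ((1 - lam₁) * π / 5) * Real.cos ((2 - lam₂) * π / 5)
      - Real.cos ((1 - lam₂) * π / 5) * Real.cos ((2 - lam₁) * π / 5)
      = - (Real.sin (π/5) * Real.sin ((lam₁ - lam₂) * π / 5)) := by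
    have e1 : (1 - lam₁) * π / 5 = π/5 - lam₁ * (π/5) := by ring
    have e2 : (1 - lam₂) * π / 5 = π/5 - lam₂ * (π/5) := by ring
    have e3 : (2 - lam₁) * π / 5 = (π/5 + π/5) - lam₁ * (π/5) := by ring
    have e4 : (2 - lam₂) * π / 5 = (π/5 + π/5) - lam₂ * (π/5) := by ring
    have e5 : (lam₁ - lam₂) * π / 5 = lam₁ * (π/5) - lam₂ * (π/5) := by ring
    rw [e1, e2, e3, e4, e5, Real.cos_sub, Real.cos_sub, Real.cos_sub, Real.cos_sub,
      Real.cos_add, Real.sin_add, Real.sin_sub]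
    have hpy := Real.sin_sq_add_cos_sq (π/5)
    linear_combination (Real.sin (π/5) * (Real.cos (lam₁ * (π/5)) * Real.sin (lam₂ * (π/5)) - Real.cos (lam₂ * (π/5)) * Real.sin (lam₁ * (π/5)))) * hpy
  have hsin5 : Real.sin (π/5) > 0 := by
    apply Real.sin_pos_of_pos_of_lt_pi <;> nlinarith
  have hsind : Real.sin ((lam₁ - lam₂) * π / 5) ≠ 0 := by
    rw [Real.sin_ne_zero_iff]
    intro n hn
    apply hdiff n
    have : (lam₁ - lam₂) * π / 5 = (n : ℝ) * π := hn.symm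
    field_simp at this
    nlinarith [hπ, this]
  have hne : Real.cos ((1 - lam₁) * π / 5) * Real.cos ((2 - lam₂) * π / 5)
      - Real.cos ((1 - lam₂) * π / 5) * Real.cos ((2 - lam₁) * π / 5) ≠ 0 := by
    rw [trig]
    intro h
    apply hsind
    have := neg_eq_zero.mp h
    rcases mul_eq_zero.mp this with h' | h'
    · exact absurd h' (ne_of_gt hsin5)
    · exact h'
  intro h
  apply hne
  field_simp at h
  rw [show π * (2 - lam₂) / 5 = (2 - lam₂) * π / 5 by ring, show π * (1 - lam₂) / 5 = (1 - lam₂) * π / 5 by ring, show π * (2 - lam₁) / 5 = (2 - lam₁) * π / 5 by ring] at h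
  linarith [h]
end
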